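/- On ℝ⁸ = ℝ³ × ℝ × ℝ³ × ℝ with the quadratic form q(x, s, y, t) = x·y + st, every subspace of the form (a,b)₊ = { (x, s, a×x + bs, −b·x) : x ∈ ℝ³, s ∈ ℝ } with a, b ∈ ℝ³ is a totally isotropic subspace of dimension 4 (maximal). -/

import Mathlib

/-!
`(a,b)₊` is the graph of the linear map `(x, s) ↦ (a×x + sb, −b·x)`, hence 4-dimensional, and `q`
vanishes on it because `x·(a×x) = 0` and the two `b`-terms cancel. For maximality, polarizing `q`
on a totally isotropic `W' ⊇ (a,b)₊` shows that every `p = (x', s', y', t') ∈ W'` is orthogonal to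
all of `(a,b)₊`. By the triple product identity that pairing with `(x, s, a×x + sb, −b·x)` is
`x·(y' − a×x' − s'b) + s(t' + b·x')`, and its vanishing for all `x, s` says exactly `p ∈ (a,b)₊`.
-/

open Matrix

/-- `ℝ⁸ = ℝ³ × ℝ × ℝ³ × ℝ`. -/
abbrev V8 : Type := (Fin 3 → ℝ) × ℝ × (Fin 3 → ℝ) × ℝ

/-- The quadratic form `q(x, s, y, t) = x·y + st` of signature `(4,4)`. -/
def q8 (p : V8) : ℝ := p.1 ⬝ᵥ p.2.2.1 + p.2.1 * p.2.2.2

/-- The set `(a,b)₊ = { (x, s, a×x + sb, −b·x) }`. -/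
def plusSet (a b : Fin 3 → ℝ) : Set V8 :=
  {p | p.2.2.1 = a ⨯₃ p.1 + p.2.1 • b ∧ p.2.2.2 = -(b ⬝ᵥ p.1)}

def plusMap (a b : Fin 3 → ℝ) : (Fin 3 → ℝ) × ℝ →ₗ[ℝ] V8 where
  toFun p := (p.1, p.2, a ⨯₃ p.1 + p.2 • b, -(b ⬝ᵥ p.1))
  map_add' p p' := by
    simp only [Prod.fst_add, Prod.snd_add, map_add, add_smul, dotProduct_add, neg_add,
      Prod.mk_add_mk]
    rw [add_add_add_comm]
  map_smul' c p := by
    ext <;> simp [smul_add, smul_smul, mul_comm]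

@[simp]
lemma plusMap_apply (a b x : Fin 3 → ℝ) (s : ℝ) :
    plusMap a b (x, s) = (x, s, a ⨯₃ x + s • b, -(b ⬝ᵥ x)) :=
  rfl

lemma plusMap_injective (a b : Fin 3 → ℝ) : Function.Injective (plusMap a b) :=
  fun _ _ h => Prod.ext (congrArg Prod.fst h :) (congrArg (·.2.1) h :)

lemma coe_range_plusMap (a b : Fin 3 → ℝ) :
    (LinearMap.range (plusMap a b) : Set V8) = plusSet a b := by
  ext ⟨x, s, y, t⟩
  constructor
  · rintro ⟨⟨x, s⟩, h⟩
    simp only [plusMap_apply, Prod.mk.injEq] at h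
    obtain ⟨rfl, rfl, rfl, rfl⟩ := h
    exact ⟨rfl, rfl⟩
  · rintro ⟨hy, ht⟩
    exact ⟨(x, s), by simp_all⟩

lemma finrank_range_plusMap (a b : Fin 3 → ℝ) :
    Module.finrank ℝ (LinearMap.range (plusMap a b)) = 4 := by
  rw [LinearMap.finrank_range_of_inj (plusMap_injective a b)]
  simp

lemma q8_plusMap (a b x : Fin 3 → ℝ) (s : ℝ) : q8 (plusMap a b (x, s)) = 0 := by
  simp only [q8, plusMap_apply, dotProduct_add, dot_cross_self, dotProduct_smul,
    dotProduct_comm x b, smul_eq_mul]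
  ring

def q8Polar (p p' : V8) : ℝ :=
  p.1 ⬝ᵥ p'.2.2.1 + p'.1 ⬝ᵥ p.2.2.1 + p.2.1 * p'.2.2.2 + p'.2.1 * p.2.2.2

lemma q8_add (p p' : V8) : q8 (p + p') = q8 p + q8 p' + q8Polar p p' := by
  simp only [q8, q8Polar, Prod.fst_add, Prod.snd_add, dotProduct_add, add_dotProduct,
    dotProduct_comm p'.1 p.2.2.1]
  ring

lemma q8Polar_eq_zero_of_isotropic {U : Submodule ℝ V8} (hU : ∀ u ∈ U, q8 u = 0)
    {u u' : V8} (hu : u ∈ U) (hu' : u' ∈ U) : q8Polar u u' = 0 := by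
  have := q8_add u u'
  rw [hU _ (U.add_mem hu hu'), hU u hu, hU u' hu'] at this
  linarith

lemma q8Polar_plusMap (a b x : Fin 3 → ℝ) (s : ℝ) (p : V8) :
    q8Polar (plusMap a b (x, s)) p =
      x ⬝ᵥ (p.2.2.1 - a ⨯₃ p.1 - p.2.1 • b) + s * (p.2.2.2 + b ⬝ᵥ p.1) := by
  have triple : p.1 ⬝ᵥ a ⨯₃ x = -(x ⬝ᵥ a ⨯₃ p.1) := by
    rw [← cross_anticomm, dotProduct_neg, triple_product_permutation]
  simp only [q8Polar, plusMap_apply, dotProduct_add, dotProduct_sub, dotProduct_smul, triple,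
    dotProduct_comm p.1 b, dotProduct_comm x b, smul_eq_mul]
  ring

lemma mem_plusSet_of_q8Polar_plusMap_eq_zero {a b : Fin 3 → ℝ} {p : V8}
    (h : ∀ x s, q8Polar (plusMap a b (x, s)) p = 0) : p ∈ plusSet a b := by
  have hy := h (p.2.2.1 - a ⨯₃ p.1 - p.2.1 • b) 0
  have ht := h 0 1
  rw [q8Polar_plusMap, zero_mul, add_zero, dotProduct_self_eq_zero, sub_sub, sub_eq_zero] at hy
  rw [q8Polar_plusMap, zero_dotProduct, zero_add, one_mul, add_eq_zero_iff_eq_neg] at ht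
  exact ⟨hy, ht⟩

theorem darboux_stmt7 (a b : Fin 3 → ℝ) (W : Submodule ℝ V8)
    (hW : (W : Set V8) = plusSet a b) :
    (∀ w ∈ W, q8 w = 0) ∧ Module.finrank ℝ W = 4 ∧
      ∀ W' : Submodule ℝ V8, (∀ w ∈ W', q8 w = 0) → W ≤ W' → W' = W := by
  obtain rfl : W = LinearMap.range (plusMap a b) :=
    SetLike.coe_injective (hW.trans (coe_range_plusMap a b).symm)
  refine ⟨?_, finrank_range_plusMap a b, fun W' hW' hle => le_antisymm ?_ hle⟩
  · rintro _ ⟨⟨x, s⟩, rfl⟩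
    exact q8_plusMap a b x s
  · intro p hp
    rw [← SetLike.mem_coe, coe_range_plusMap]
    exact mem_plusSet_of_q8Polar_plusMap_eq_zero fun x s =>
      q8Polar_eq_zero_of_isotropic hW' (hle ⟨(x, s), rfl⟩) hp
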